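/- arXiv:2303.09504 — 2 statements merged into one kernel-verified Lean document; each statement's English description precedes it below -/
import Mathlib

section
/- Let $F$ be the free group on two generators $s, t$ (equivalently, the Artin group on $X = \{s,t\}$ with $m(s,t) = \infty$), and let $M$ be the submonoid of $F$ generated by $\{s,t\}$. Then for every $m \geq 1$, the element $(st^{-1})^m$ satisfies $d_M(e, (st^{-1})^m) = 2m$, where $d_M$ is the monoid word metric; in particular, the monoid Cayley graph of $F$ has infinite diameter. -/
/-- The alternating product `x y x y ⋯` of length `n` in the free group, starting with `x`. -/
def altProd {X : Type*} : ℕ → X → X → FreeGroup X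
  | 0, _, _ => 1
  | n + 1, x, y => FreeGroup.of x * altProd n y x

/-- The Artin relations associated to a labelling `m : X → X → ℕ∞` (label `⊤` = no relation):
for each pair `x ≠ y` with finite label `k`, the relator `(xyx⋯)(yxy⋯)⁻¹` (both of length `k`). -/
def artinRels {X : Type*} (m : X → X → ℕ∞) : Set (FreeGroup X) :=
  { r | ∃ (x y : X) (k : ℕ), x ≠ y ∧ m x y = (k : ℕ∞) ∧
      r = altProd k x y * (altProd k y x)⁻¹ }

/-- The Artin group of the labelled graph encoded by `m`. -/
abbrev ArtinGroup {X : Type*} (m : X → X → ℕ∞) : Type _ := PresentedGroup (artinRels m)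

/-- The standard generators of the Artin group. -/
def artinGen {X : Type*} (m : X → X → ℕ∞) (x : X) : ArtinGroup m := PresentedGroup.of x

/-- The Artin monoid: the submonoid of the Artin group generated by the standard generators. -/
def artinMonoid {X : Type*} (m : X → X → ℕ∞) : Submonoid (ArtinGroup m) :=
  Submonoid.closure (Set.range (artinGen m))

/-- The monoid word metric on a group `G` relative to a submonoid `M`: `monoidDist M g h` is the
least `n` such that `g⁻¹ * h` is a product of `n` elements each lying in `M` or `M⁻¹`. -/
noncomputable def monoidDist {G : Type*} [Group G] (M : Submonoid G) (g h : G) : ℕ :=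
  sInf { n : ℕ | ∃ l : List G, l.length = n ∧ (∀ a ∈ l, a ∈ M ∨ a⁻¹ ∈ M) ∧ g⁻¹ * h = l.prod }

/-- A word over `X`: a list of letters `x^ε`, where `ε = true` denotes the positive letter `x`
and `ε = false` the negative letter `x⁻¹`. -/
abbrev Word (X : Type*) := List (X × Bool)

/-- The element of `G` represented by a word over `X`, given `f : X → G`. -/
def evalWord {X G : Type*} [Group G] (f : X → G) (w : Word X) : G :=
  (w.map (fun p => if p.2 then f p.1 else (f p.1)⁻¹)).prod

/-- A word is positive if all its letters are positive. -/
def IsPosWord {X : Type*} (w : Word X) : Prop := ∀ p ∈ w, p.2 = true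

/-- A word is negative if all its letters are negative. -/
def IsNegWord {X : Type*} (w : Word X) : Prop := ∀ p ∈ w, p.2 = false

/-- A word is geodesic if no strictly shorter word represents the same element of `G`. -/
def IsGeodesic {X G : Type*} [Group G] (f : X → G) (w : Word X) : Prop :=
  ∀ v : Word X, evalWord f v = evalWord f w → w.length ≤ v.length

/-- `(u, x)` is a blocking pair if for every word `w` such that `w ++ u` is geodesic,
the word `w ++ u ++ [x]` is also geodesic. -/
def BlockingPair {X G : Type*} [Group G] (f : X → G) (u : Word X) (x : X × Bool) : Prop :=
  ∀ w : Word X, IsGeodesic f (w ++ u) → IsGeodesic f (w ++ u ++ [x])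

/-- An alternating blocking sequence `(α n)` (indexed from `n = 1`; the value `α 0` is ignored):
each `α n` is nonempty, positive for odd `n` and negative for even `n`, and every letter `x`
of `α n` is immediately preceded, within `α (n-1) ++ α n` (with `α 0` read as the empty word),
by a subword `u` such that `(u, x)` is a blocking pair. -/
def IsAltBlockingSeq {X G : Type*} [Group G] (f : X → G) (α : ℕ → Word X) : Prop :=
  (∀ n, 1 ≤ n → α n ≠ []) ∧
  (∀ n, 1 ≤ n → Odd n → IsPosWord (α n)) ∧
  (∀ n, 1 ≤ n → Even n → IsNegWord (α n)) ∧
  (∀ n, 1 ≤ n → ∀ p x s, α n = p ++ x :: s →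
    ∃ u : Word X, u <:+ ((if n = 1 then ([] : Word X) else α (n - 1)) ++ p) ∧
      BlockingPair f u x)

/-- `u` is the longest positive (`ε = true`) resp. negative (`ε = false`) proper suffix of `w`. -/
def IsLongestSignedProperSuffix {X : Type*} (ε : Bool) (w u : Word X) : Prop :=
  u <:+ w ∧ u ≠ w ∧ (∀ p ∈ u, p.2 = ε) ∧
    ∀ v : Word X, v <:+ w → v ≠ w → (∀ p ∈ v, p.2 = ε) → v.length ≤ u.length

/-- Preserved positive (`ε = true`) resp. negative (`ε = false`) suffixes: whenever `w` is a
geodesic word ending in a letter of sign `ε`, `u` is the longest proper suffix of `w` of sign `ε`,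
and `a` is a generator, the element represented by `a^ε · w` admits a geodesic representative
having `u` as a suffix. -/
def PreservedSignSuffixes {X G : Type*} [Group G] (ε : Bool) (f : X → G) : Prop :=
  ∀ (w : Word X) (y : X), IsGeodesic f w → w.getLast? = some (y, ε) →
    ∀ u : Word X, IsLongestSignedProperSuffix ε w u →
    ∀ a : X, ∃ w' : Word X, IsGeodesic f w' ∧
      evalWord f w' = evalWord f ((a, ε) :: w) ∧ u <:+ w'

/-- Preserved signed suffixes: both preserved positive and preserved negative suffixes. -/
def PreservedSignedSuffixes {X G : Type*} [Group G] (f : X → G) : Prop :=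
  PreservedSignSuffixes true f ∧ PreservedSignSuffixes false f


/-!
Count the sign runs of the reduced word of an element of the free group. A positive letter
placed in front of a reduced word either cancels a negative first letter or joins a positive
first run, so it never increases the number of runs of `true :: w`; symmetrically for negative
letters and `false :: w`. Hence left multiplication by an element of `M` or `M⁻¹` adds at most
one run, and a product of `n` such elements has at most `n` runs. The reduced word of
`(s t⁻¹)ᵐ` is `s t⁻¹ s t⁻¹ ⋯` itself, with `2m` runs.
-/

section MonoidDist

variable {G : Type*} [Group G] {M : Submonoid G} {g h : G}

theorem monoidDist_le_length {l : List G} (hl : ∀ a ∈ l, a ∈ M ∨ a⁻¹ ∈ M)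
    (hprod : g⁻¹ * h = l.prod) : monoidDist M g h ≤ l.length :=
  Nat.sInf_le ⟨l, rfl, hl, hprod⟩

theorem le_monoidDist {n : ℕ}
    (hne : ∃ l : List G, (∀ a ∈ l, a ∈ M ∨ a⁻¹ ∈ M) ∧ g⁻¹ * h = l.prod)
    (hle : ∀ l : List G, (∀ a ∈ l, a ∈ M ∨ a⁻¹ ∈ M) → g⁻¹ * h = l.prod →
      n ≤ l.length) :
    n ≤ monoidDist M g h := by
  obtain ⟨l, hl, hprod⟩ := hne
  refine le_csInf ⟨l.length, l, rfl, hl, hprod⟩ ?_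
  rintro _ ⟨l', rfl, hl', hprod'⟩
  exact hle l' hl' hprod'

end MonoidDist

namespace List

variable {β : Type*} [DecidableEq β]

def numRuns (l : List β) : ℕ := (l.destutter (· ≠ ·)).length

theorem numRuns_cons_cons_self (a : β) (l : List β) :
    numRuns (a :: a :: l) = numRuns (a :: l) := by
  simp [numRuns, destutter_cons']

theorem numRuns_cons_cons_of_ne {a b : β} (hab : a ≠ b) (l : List β) :
    numRuns (a :: b :: l) = numRuns (b :: l) + 1 := by
  simp [numRuns, destutter_cons', hab]

theorem numRuns_le_numRuns_cons (a : β) (l : List β) : numRuns l ≤ numRuns (a :: l) :=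
  length_destutter_ne_le_length_destutter_cons

theorem numRuns_cons_le (a : β) : ∀ l : List β, numRuns (a :: l) ≤ numRuns l + 1
  | [] => by simp [numRuns]
  | b :: l => by
    by_cases hab : a = b
    · rw [hab, numRuns_cons_cons_self]; omega
    · rw [numRuns_cons_cons_of_ne hab]

end List

namespace FreeGroup

variable {α : Type*}

section Signs

variable [DecidableEq α]

def signs (g : FreeGroup α) : List Bool := g.toWord.map Prod.snd

theorem toWord_mk_singleton_mul (x : α) (ε : Bool) (g : FreeGroup α) :
    (mk [(x, ε)] * g).toWord = (x, ε) :: g.toWord ∨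
      g.toWord = (x, !ε) :: (mk [(x, ε)] * g).toWord := by
  have hred : (mk [(x, ε)] * g).toWord = reduce ((x, ε) :: g.toWord) := by
    rw [toWord_mul, toWord_mk, reduce_singleton, List.singleton_append]
  rw [hred, reduce.cons, reduce_toWord]
  rcases g.toWord with _ | ⟨⟨y, δ⟩, t⟩
  · exact .inl rfl
  · by_cases hc : x = y ∧ ε = !δ
    · obtain ⟨rfl, rfl⟩ := hc
      simp
    · simp [hc]

theorem numRuns_cons_signs_mk_singleton_mul_le (x : α) (ε : Bool) (g : FreeGroup α) :
    (ε :: (mk [(x, ε)] * g).signs).numRuns ≤ (ε :: g.signs).numRuns := by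
  rcases toWord_mk_singleton_mul x ε g with h | h
  · simp [signs, h, List.numRuns_cons_cons_self]
  · set s := (mk [(x, ε)] * g).signs
    have hs : g.signs = (!ε) :: s := by simp [signs, s, h]
    calc (ε :: s).numRuns ≤ s.numRuns + 1 := List.numRuns_cons_le ε s
      _ ≤ ((!ε) :: s).numRuns + 1 := by grw [List.numRuns_le_numRuns_cons (!ε) s]
      _ = (ε :: g.signs).numRuns := by
        rw [hs, List.numRuns_cons_cons_of_ne (Bool.not_ne_self ε).symm]

theorem numRuns_cons_signs_mul_le_of_mem_closure {m : FreeGroup α}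
    (hm : m ∈ Submonoid.closure (Set.range of)) (g : FreeGroup α) :
    (true :: (m * g).signs).numRuns ≤ (true :: g.signs).numRuns := by
  induction hm using Submonoid.closure_induction generalizing g with
  | mem _ hx =>
    obtain ⟨x, rfl⟩ := hx
    exact numRuns_cons_signs_mk_singleton_mul_le x true g
  | one => simp
  | mul u v _ _ ihu ihv => rw [mul_assoc]; exact (ihu _).trans (ihv g)

theorem numRuns_cons_signs_inv_mul_le_of_mem_closure {m : FreeGroup α}
    (hm : m ∈ Submonoid.closure (Set.range of)) (g : FreeGroup α) :
    (false :: (m⁻¹ * g).signs).numRuns ≤ (false :: g.signs).numRuns := by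
  induction hm using Submonoid.closure_induction generalizing g with
  | mem _ hx =>
    obtain ⟨x, rfl⟩ := hx
    exact numRuns_cons_signs_mk_singleton_mul_le x false g
  | one => simp
  | mul u v _ _ ihu ihv => rw [mul_inv_rev, mul_assoc]; exact (ihv _).trans (ihu g)

theorem numRuns_signs_mul_le {a : FreeGroup α}
    (ha : a ∈ Submonoid.closure (Set.range of) ∨ a⁻¹ ∈ Submonoid.closure (Set.range of))
    (g : FreeGroup α) : (a * g).signs.numRuns ≤ g.signs.numRuns + 1 := by
  obtain ⟨ε, hε⟩ : ∃ ε, (ε :: (a * g).signs).numRuns ≤ (ε :: g.signs).numRuns := by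
    rcases ha with ha | ha
    · exact ⟨true, numRuns_cons_signs_mul_le_of_mem_closure ha g⟩
    · exact ⟨false, by simpa using numRuns_cons_signs_inv_mul_le_of_mem_closure ha g⟩
  calc (a * g).signs.numRuns ≤ (ε :: (a * g).signs).numRuns := List.numRuns_le_numRuns_cons _ _
    _ ≤ (ε :: g.signs).numRuns := hε
    _ ≤ g.signs.numRuns + 1 := List.numRuns_cons_le _ _

theorem numRuns_signs_prod_le (l : List (FreeGroup α))
    (hl : ∀ a ∈ l,
      a ∈ Submonoid.closure (Set.range of) ∨ a⁻¹ ∈ Submonoid.closure (Set.range of)) :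
    l.prod.signs.numRuns ≤ l.length := by
  induction l with
  | nil => simp [signs, List.numRuns]
  | cons a l ih =>
    rw [List.prod_cons, List.length_cons]
    grw [numRuns_signs_mul_le (hl a List.mem_cons_self),
      ih fun b hb => hl b (List.mem_cons_of_mem a hb)]

end Signs

def altWord (a b : α) : ℕ → List (α × Bool)
  | 0 => []
  | k + 1 => (a, true) :: (b, false) :: altWord a b k

theorem mk_altWord (a b : α) (k : ℕ) : mk (altWord a b k) = (of a * (of b)⁻¹) ^ k := by
  induction k with
  | zero => rfl
  | succ k ih => rw [pow_succ', ← ih, of, of, inv_mk, mul_mk, mul_mk]; rfl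

theorem isReduced_cons_altWord {a b : α} (hab : a ≠ b) (k : ℕ) :
    IsReduced ((b, false) :: altWord a b k) := by
  induction k with
  | zero => exact .singleton
  | succ k ih => simpa [altWord, isReduced_cons_cons, hab, hab.symm] using ih

theorem toWord_mul_inv_pow [DecidableEq α] {a b : α} (hab : a ≠ b) (k : ℕ) :
    ((of a * (of b)⁻¹) ^ k).toWord = altWord a b k := by
  have hred : IsReduced (altWord a b k) :=
    (isReduced_cons_altWord hab k).infix (List.suffix_cons _ _).isInfix
  rw [← mk_altWord, toWord_mk, hred.reduce_eq]

theorem numRuns_cons_map_snd_altWord (a b : α) (k : ℕ) :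
    (false :: (altWord a b k).map Prod.snd).numRuns = 2 * k + 1 := by
  induction k with
  | zero => rfl
  | succ k ih =>
    simp only [altWord, List.map_cons, List.numRuns_cons_cons_of_ne Bool.false_ne_true,
      List.numRuns_cons_cons_of_ne Bool.false_ne_true.symm, ih]
    ring

theorem numRuns_signs_mul_inv_pow [DecidableEq α] {a b : α} (hab : a ≠ b) (k : ℕ) :
    ((of a * (of b)⁻¹) ^ k).signs.numRuns = 2 * k := by
  rw [signs, toWord_mul_inv_pow hab]
  cases k with
  | zero => rfl
  | succ k =>
    simp only [altWord, List.map_cons, List.numRuns_cons_cons_of_ne Bool.false_ne_true.symm,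
      numRuns_cons_map_snd_altWord]
    ring

theorem monoidDist_one_mul_inv_pow {a b : α} (hab : a ≠ b) (k : ℕ) :
    monoidDist (Submonoid.closure (Set.range of)) 1 ((of a * (of b)⁻¹) ^ k) = 2 * k := by
  classical
  set M := Submonoid.closure (Set.range (of : α → FreeGroup α))
  set l := (List.replicate k [of a, (of b)⁻¹]).flatten
  have hl : ∀ x ∈ l, x ∈ M ∨ x⁻¹ ∈ M := by
    intro x hx
    obtain ⟨_, hw, hx⟩ := List.mem_flatten.1 hx
    rw [(List.mem_replicate.1 hw).2, List.mem_pair] at hx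
    rcases hx with rfl | rfl
    · exact .inl (Submonoid.subset_closure (Set.mem_range_self a))
    · exact .inr (by simpa using Submonoid.subset_closure (Set.mem_range_self b))
  have hprod : (1 : FreeGroup α)⁻¹ * (of a * (of b)⁻¹) ^ k = l.prod := by
    simp [l, List.prod_flatten]
  apply le_antisymm
  · simpa [l, mul_comm] using monoidDist_le_length hl hprod
  · refine le_monoidDist ⟨l, hl, hprod⟩ fun l' hl' hprod' => ?_
    rw [inv_one, one_mul] at hprod'
    rw [← numRuns_signs_mul_inv_pow hab, hprod']
    exact numRuns_signs_prod_le l' hl'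

end FreeGroup

/-- In the free group on two generators `s, t` (here `s = FreeGroup.of true`,
`t = FreeGroup.of false`), with `M` the submonoid generated by `s` and `t`, the element
`(s t⁻¹)^k` is at monoid-distance exactly `2k` from the identity; in particular the monoid
Cayley graph has infinite diameter. -/
theorem freeGroup_monoidDist_st_inv_pow :
    (∀ k : ℕ, 1 ≤ k →
      monoidDist (Submonoid.closure (Set.range (FreeGroup.of : Bool → FreeGroup Bool))) 1
        ((FreeGroup.of true * (FreeGroup.of false)⁻¹) ^ k) = 2 * k) ∧
    (∀ n : ℕ, ∃ g : FreeGroup Bool,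
      n < monoidDist (Submonoid.closure (Set.range (FreeGroup.of : Bool → FreeGroup Bool)))
            1 g) := by
  have hdist := FreeGroup.monoidDist_one_mul_inv_pow Bool.false_ne_true.symm
  refine ⟨fun k _ => hdist k, fun n => ?_⟩
  refine ⟨(FreeGroup.of true * (FreeGroup.of false)⁻¹) ^ (n + 1), ?_⟩
  rw [hdist]
  omega
end

section
/- Let $X$ be a finite set and $m$ a symmetric labelling assigning to each pair of distinct $x,y \in X$ an integer $m(x,y) \geq 2$ (all labels finite) with $m(x,y) \neq 3$ for all pairs. If the associated Coxeter group $W_\Gamma$ is infinite, then there exist pairwise distinct $a, b, c \in X$ such that at most one of $m(a,b)$, $m(b,c)$, $m(a,c)$ equals $2$. -/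
/-!
If no triple of distinct generators has at most one label equal to `2`, then every generator
fails to commute with at most one other, i.e. the Coxeter diagram is a matching. The group is
then generated by pairwise commuting subgroups, one for each component of the diagram, each a
finite dihedral group or of order at most `2`; hence it is finite.
-/

open Subgroup in
theorem Subgroup.finite_closure_pair_of_involutions {G : Type*} [Group G] {a b : G}
    (ha : a * a = 1) (hb : b * b = 1) (hab : IsOfFinOrder (a * b)) :
    Finite (closure {a, b}) := by
  have ha' : IsOfFinOrder a := isOfFinOrder_iff_pow_eq_one.mpr ⟨2, two_pos, by rwa [sq]⟩
  have hconj : a * (a * b) * a⁻¹ = (a * b)⁻¹ := by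
    rw [inv_eq_of_mul_eq_one_left ha, mul_inv_rev, inv_eq_of_mul_eq_one_left ha,
      inv_eq_of_mul_eq_one_left hb, ← mul_assoc, ha, one_mul]
  have hnorm : zpowers a ≤ normalizer (zpowers (a * b)) := by
    rw [zpowers_le, mem_normalizer_iff_map_conj_eq, MonoidHom.map_zpowers]
    exact (congrArg zpowers hconj).trans zpowers_inv
  have hle : closure {a, b} ≤ zpowers a ⊔ zpowers (a * b) := by
    rw [closure_le, Set.insert_subset_iff, Set.singleton_subset_iff]
    refine ⟨mem_sup_left (mem_zpowers a), ?_⟩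
    simpa using mul_mem (inv_mem (mem_sup_left (mem_zpowers a)))
      (mem_sup_right (mem_zpowers (a * b)))
  have hfin : ((zpowers a ⊔ zpowers (a * b) : Subgroup G) : Set G).Finite := by
    rw [coe_mul_of_left_le_normalizer_right _ _ hnorm]
    exact ha'.finite_zpowers.mul hab.finite_zpowers
  exact (hfin.subset hle).to_subtype

theorem Subgroup.finite_of_iSup_eq_top_of_pairwise_commute {G ι : Type*} [Group G] [Finite ι]
    {H : ι → Subgroup G} [∀ i, Finite (H i)]
    (hcomm : Pairwise fun i j => ∀ x y : G, x ∈ H i → y ∈ H j → Commute x y)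
    (htop : ⨆ i, H i = ⊤) : Finite G := by
  have := Fintype.ofFinite ι
  refine Finite.of_surjective (noncommPiCoprod hcomm) ?_
  rw [← MonoidHom.range_eq_top, noncommPiCoprod_range, htop]

theorem CoxeterSystem.simple_commute_of_eq_two {B W : Type*} [Group W] {M : CoxeterMatrix B}
    (cs : CoxeterSystem M W) {i j : B} (h : M i j = 2) : Commute (cs.simple i) (cs.simple j) := by
  have := cs.simple_mul_simple_pow i j
  rwa [h, pow_two, mul_eq_one_iff_eq_inv, mul_inv_rev, cs.inv_simple, cs.inv_simple] at this

namespace CoxeterMatrix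

variable {B : Type*} {M : CoxeterMatrix B}

/-- Every node of the Coxeter diagram (which joins `i ≠ j` when `M i j ≠ 2`) has at most one
neighbour. -/
def DiagramIsMatching (M : CoxeterMatrix B) : Prop :=
  ∀ x y z, x ≠ y → x ≠ z → M x y ≠ 2 → M x z ≠ 2 → y = z

/-- The connected components of the diagram; the relation is reflexive because `M i i = 1`. -/
def DiagramIsMatching.componentSetoid (h : M.DiagramIsMatching) : Setoid B where
  r x y := M x y ≠ 2
  iseqv := by
    refine ⟨fun x => by simp, fun hxy => by rwa [M.symmetric], fun {x y z} hxy hyz => ?_⟩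
    by_cases hxz : x = z
    · simp [hxz]
    by_cases hyx : y = x
    · rwa [hyx] at hyz
    by_cases hyz' : y = z
    · rwa [← hyz']
    exact absurd (h y x z hyx hyz' (by rwa [M.symmetric]) hyz) hxz

theorem DiagramIsMatching.exists_partner (h : M.DiagramIsMatching) (i : B) :
    ∃ j, ∀ k, M i k ≠ 2 → k = i ∨ k = j := by
  by_cases hi : ∃ j, i ≠ j ∧ M i j ≠ 2
  · obtain ⟨j, hij, hj⟩ := hi
    refine ⟨j, fun k hk => or_iff_not_imp_left.mpr fun hki => ?_⟩
    exact (h i j k hij (Ne.symm hki) hj hk).symm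
  · push Not at hi
    exact ⟨i, fun k hk => Or.inl (by_contra fun hki => hk (hi k (Ne.symm hki)))⟩

end CoxeterMatrix

theorem CoxeterSystem.finite_of_diagramIsMatching {B W : Type*} [Finite B] [Group W]
    {M : CoxeterMatrix B} (cs : CoxeterSystem M W) (hfin : ∀ i j, M i j ≠ 0)
    (hmatch : M.DiagramIsMatching) : Finite W := by
  let S := hmatch.componentSetoid
  let H : Quotient S → Subgroup W := fun q => Subgroup.closure (cs.simple '' {i | ⟦i⟧ = q})
  have hfinite : ∀ q, Finite (H q) := by
    refine Quotient.ind fun i => ?_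
    obtain ⟨j, hj⟩ := hmatch.exists_partner i
    have hle : H ⟦i⟧ ≤ Subgroup.closure {cs.simple i, cs.simple j} := by
      refine Subgroup.closure_mono ?_
      rintro _ ⟨k, hk, rfl⟩
      rcases hj k (by rw [M.symmetric]; exact Quotient.exact hk) with rfl | rfl <;> simp
    have := Subgroup.finite_closure_pair_of_involutions (cs.simple_mul_simple_self i)
      (cs.simple_mul_simple_self j) (isOfFinOrder_iff_pow_eq_one.mpr
        ⟨_, Nat.pos_of_ne_zero (hfin i j), cs.simple_mul_simple_pow i j⟩)
    exact Finite.of_injective _ (Subgroup.inclusion_injective hle)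
  have hcomm : Pairwise fun q q' => ∀ x y : W, x ∈ H q → y ∈ H q' → Commute x y := by
    intro q q' hne x y hx hy
    have hcent : H q ≤ Subgroup.centralizer (H q') := by
      rw [Subgroup.closure_le, Subgroup.centralizer_closure]
      rintro _ ⟨i, rfl, rfl⟩ _ ⟨j, rfl, rfl⟩
      refine (cs.simple_commute_of_eq_two (i := j) (j := i) (not_not.mp fun h => hne ?_)).eq
      exact (Quotient.sound h).symm
    exact (Subgroup.mem_centralizer_iff.mp (hcent hx) y hy).symm
  have htop : ⨆ q, H q = ⊤ := by
    rw [eq_top_iff, ← cs.subgroup_closure_range_simple, Subgroup.closure_le]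
    rintro _ ⟨i, rfl⟩
    exact Subgroup.mem_iSup_of_mem ⟦i⟧ (Subgroup.subset_closure ⟨i, rfl, rfl⟩)
  exact Subgroup.finite_of_iSup_eq_top_of_pairwise_commute hcomm htop

theorem three_free_infinite_coxeter_has_triangle_general {X : Type*} [Fintype X]
    (cm : CoxeterMatrix X)
    (hge2 : ∀ x y : X, x ≠ y → 2 ≤ cm x y)
    (hinf : Infinite cm.Group) :
    ∃ a b c : X, a ≠ b ∧ b ≠ c ∧ a ≠ c ∧
      ¬(cm a b = 2 ∧ cm b c = 2) ∧ ¬(cm a b = 2 ∧ cm a c = 2) ∧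
      ¬(cm b c = 2 ∧ cm a c = 2) := by
  by_contra h
  have hfin : ∀ i j, cm i j ≠ 0 := fun i j => by
    by_cases hij : i = j
    · simp [hij]
    · have := hge2 i j hij
      omega
  have hmatch : cm.DiagramIsMatching := fun x y z hxy hxz hy hz => by_contra fun hyz =>
    h ⟨y, x, z, Ne.symm hxy, hxz, hyz, fun h' => hz h'.2,
      fun h' => hy (by rw [cm.symmetric]; exact h'.1), fun h' => hz h'.1⟩
  have := cm.toCoxeterSystem.finite_of_diagramIsMatching hfin hmatch
  exact not_finite cm.Group

/-- Let `X` be a finite set and `cm` a Coxeter matrix on `X` all of whose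
off-diagonal entries are finite (at least `2`, the Mathlib convention `0 = ∞` being excluded)
and none equal to `3` (the 3-free condition). If the associated Coxeter group is infinite,
then there exist pairwise distinct `a, b, c ∈ X` such that at most one of the labels
`cm a b`, `cm b c`, `cm a c` equals `2`. -/
theorem three_free_infinite_coxeter_has_triangle {X : Type*} [Fintype X]
    (cm : CoxeterMatrix X)
    (hge2 : ∀ x y : X, x ≠ y → 2 ≤ cm x y)
    (h3free : ∀ x y : X, x ≠ y → cm x y ≠ 3)
    (hinf : Infinite cm.Group) :
    ∃ a b c : X, a ≠ b ∧ b ≠ c ∧ a ≠ c ∧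
      ¬(cm a b = 2 ∧ cm b c = 2) ∧ ¬(cm a b = 2 ∧ cm a c = 2) ∧
      ¬(cm b c = 2 ∧ cm a c = 2) :=
  three_free_infinite_coxeter_has_triangle_general cm hge2 hinf
end
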